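/- Let a ∈ ℝ, β > 0, 0 < α ≤ 1 and t > 0. Then the power function t ↦ t^a is α-differentiable at t and 𝒟_M^{α,β}(t^a) = (a / Γ(β+1)) · t^{a−α}. -/

import Mathlib

open Filter Topology

/-- One-parameter Mittag-Leffler function `E_β(x) = ∑_{k=0}^∞ x^k / Γ(βk+1)`. -/
noncomputable def mittagLeffler (β x : ℝ) : ℝ :=
  ∑' k : ℕ, x ^ k / Real.Gamma (β * k + 1)

/-- `f` has local M-derivative `L` of order `α` with parameter `β` at `t`, i.e.
`lim_{ε→0} (f (t · E_β (ε t^{-α})) - f t)/ε = L`. -/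
def HasLocalMDerivAt (α β : ℝ) (f : ℝ → ℝ) (t L : ℝ) : Prop :=
  Tendsto (fun ε : ℝ => (f (t * mittagLeffler β (ε * t ^ (-α))) - f t) / ε)
    (𝓝[≠] (0 : ℝ)) (𝓝 L)

/-!
Since `E_β` is a power series with `E_β(0) = 1` and `E_β'(0) = 1/Γ(β+1)`, the curve
`ε ↦ t · E_β(ε t^{-α})` passes through `t` with velocity `t^{1-α}/Γ(β+1)`, so by the chain rule
the local M-derivative of a differentiable `f` is `f'(t) t^{1-α}/Γ(β+1)`. For `f = x^a` this is
`a t^{a-1} t^{1-α}/Γ(β+1) = a t^{a-α}/Γ(β+1)`. The coefficients `1/Γ(βk+1)` are bounded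
because `Γ ≥ 1/2` on `[1, ∞)`, which gives the power series a positive radius.
-/

namespace Real

lemma one_le_Gamma_of_two_le {x : ℝ} (hx : 2 ≤ x) : 1 ≤ Gamma x := by
  simpa [Gamma_two] using
    Gamma_strictMonoOn_Ici.monotoneOn (Set.mem_Ici.mpr le_rfl) hx hx

lemma half_le_Gamma_of_one_le {x : ℝ} (hx : 1 ≤ x) : 1 / 2 ≤ Gamma x := by
  rcases le_or_gt 2 x with h2 | h2
  · linarith [one_le_Gamma_of_two_le h2]
  · have hx0 : 0 < x := by linarith
    have hstep : 1 ≤ x * Gamma x := by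
      rw [← Gamma_add_one hx0.ne']
      exact one_le_Gamma_of_two_le (by linarith)
    nlinarith [Gamma_pos_of_pos hx0]

end Real

noncomputable def mittagLefflerSeries (β : ℝ) : FormalMultilinearSeries ℝ ℝ ℝ :=
  FormalMultilinearSeries.ofScalars ℝ (fun k : ℕ => (Real.Gamma (β * k + 1))⁻¹)

lemma mittagLeffler_eq_ofScalarsSum (β : ℝ) :
    mittagLeffler β = FormalMultilinearSeries.ofScalarsSum
      (fun k : ℕ => (Real.Gamma (β * k + 1))⁻¹) := by
  funext x
  rw [FormalMultilinearSeries.ofScalarsSum_eq_tsum, mittagLeffler]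
  exact tsum_congr fun k => by rw [smul_eq_mul, div_eq_mul_inv, mul_comm]

lemma mittagLeffler_zero (β : ℝ) : mittagLeffler β 0 = 1 := by
  rw [mittagLeffler_eq_ofScalarsSum, FormalMultilinearSeries.ofScalarsSum_zero]
  norm_num [Real.Gamma_one]

lemma one_le_radius_mittagLefflerSeries {β : ℝ} (hβ : 0 ≤ β) :
    1 ≤ (mittagLefflerSeries β).radius := by
  refine FormalMultilinearSeries.le_radius_of_bound _ 2 fun n => ?_
  have hn : 1 ≤ β * n + 1 := by nlinarith [n.cast_nonneg (α := ℝ)]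
  have hGpos : 0 < Real.Gamma (β * n + 1) := Real.Gamma_pos_of_pos (by linarith)
  simp only [mittagLefflerSeries, FormalMultilinearSeries.ofScalars_norm, NNReal.coe_one,
    one_pow, mul_one, Real.norm_eq_abs, abs_of_pos (inv_pos.mpr hGpos)]
  rw [inv_le_comm₀ hGpos two_pos]
  simpa using Real.half_le_Gamma_of_one_le hn

lemma hasDerivAt_mittagLeffler_zero {β : ℝ} (hβ : 0 ≤ β) :
    HasDerivAt (mittagLeffler β) (Real.Gamma (β + 1))⁻¹ 0 := by
  have hps : HasFPowerSeriesAt (mittagLeffler β) (mittagLefflerSeries β) 0 := by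
    rw [mittagLeffler_eq_ofScalarsSum]
    exact ((mittagLefflerSeries β).hasFPowerSeriesOnBall
      (zero_lt_one.trans_le (one_le_radius_mittagLefflerSeries hβ))).hasFPowerSeriesAt
  simpa [mittagLefflerSeries, FormalMultilinearSeries.ofScalars_apply_eq] using hps.hasDerivAt

theorem HasDerivAt.hasLocalMDerivAt {f : ℝ → ℝ} {f' t : ℝ} (α : ℝ) {β : ℝ} (hβ : 0 ≤ β)
    (hf : HasDerivAt f f' t) :
    HasLocalMDerivAt α β f t (f' * (t * ((Real.Gamma (β + 1))⁻¹ * t ^ (-α)))) := by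
  set γ : ℝ → ℝ := fun ε => t * mittagLeffler β (ε * t ^ (-α))
  have hγ0 : γ 0 = t := by simp [γ, mittagLeffler_zero]
  have hγ : HasDerivAt γ (t * ((Real.Gamma (β + 1))⁻¹ * t ^ (-α))) 0 := by
    have hE := hasDerivAt_mittagLeffler_zero hβ
    rw [← zero_mul (t ^ (-α))] at hE
    simpa using ((hE.comp 0 ((hasDerivAt_id 0).mul_const (t ^ (-α)))).const_mul t)
  rw [← hγ0] at hf
  refine (hasDerivAt_iff_tendsto_slope.mp (hf.comp 0 hγ)).congr fun ε => ?_
  simp [slope_fun_def, γ, mittagLeffler_zero, div_eq_inv_mul]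

theorem stmt10_general (a α β t : ℝ) (hβ : 0 < β) (ht : 0 < t) :
    HasLocalMDerivAt α β (fun x : ℝ => x ^ a) t
      (a / Real.Gamma (β + 1) * t ^ (a - α)) := by
  have h := (Real.hasDerivAt_rpow_const (p := a) (Or.inl ht.ne')).hasLocalMDerivAt α hβ.le
  convert h using 1
  rw [show a - α = (a - 1) + 1 + -α by ring, Real.rpow_add ht, Real.rpow_add ht, Real.rpow_one]
  ring

/-- `𝒟_M^{α,β}(t^a) = (a/Γ(β+1)) t^{a-α}`. -/
theorem stmt10 (a α β t : ℝ) (hα0 : 0 < α) (hα1 : α ≤ 1) (hβ : 0 < β) (ht : 0 < t) :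
    HasLocalMDerivAt α β (fun x : ℝ => x ^ a) t
      (a / Real.Gamma (β + 1) * t ^ (a - α)) :=
  stmt10_general a α β t hβ ht
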